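/- arXiv:1302.2832 — 3 statements merged into one kernel-verified Lean document; each statement's English description precedes it below -/
import Mathlib

section
/- Let A be a complete normed unital algebra (Banach algebra) with submultiplicative norm and ‖1‖ = 1, let 0 ≤ R < S and C > 0, and let (a_{r,s})_{R ≤ r ≤ s ≤ S} be a family of elements of A such that ‖a_{r,s}‖ ≤ (s − r)·C for all r ≤ s, and a_{r,t} = a_{r,s} + a_{s,t} whenever r < s < t. Set g_{r,s} := 1 + a_{r,s} and Θ_α := g_{t₁,t₂}·⋯·g_{t_n,t_{n+1}} for a partition α = {R = t₁ < … < t_{n+1} = S}. Then the net (Θ_α)_{α ∈ P[R,S]} converges: there exists U ∈ A such that for every ε > 0 there is a partition γ of [R,S] with ‖Θ_α − U‖ < ε for all partitions α ⊇ γ. -/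
/-!
Write `Θ_α` for the ordered product and `E(α) = Σ (t_{i+1} - t_i)²` for the energy of a
partition `α`. Inserting a point `p` between consecutive points `t < u` replaces the factor
`1 + a_{t,u}` by `(1 + a_{t,p})(1 + a_{p,u})`, and additivity leaves only `a_{t,p} a_{p,u}`;
with both partial products bounded by `exp (C (S - R))`, this changes `Θ` by at most
`C² exp (2C (S - R)) (p - t)(u - p)`, which is a constant times the drop `2 (p - t)(u - p)`
of the energy. Inserting the points of `β \ α` one at a time gives
`‖Θ_β - Θ_α‖ ≤ K (E(α) - E(β)) ≤ K E(α)` whenever `α ⊆ β`, with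
`K = C² exp (2C (S - R)) / 2`. Fine uniform grids have small energy, so the net is Cauchy,
and it converges since `A` is complete.
-/

/-- A partition of the interval `[R, S]`: a finite set of reals containing `R` and `S`
all of whose elements lie in `[R, S]`. -/
def IsPartition (R S : ℝ) (α : Finset ℝ) : Prop :=
  R ∈ α ∧ S ∈ α ∧ ∀ t ∈ α, R ≤ t ∧ t ≤ S

/-- The list of consecutive pairs `(t₁,t₂), (t₂,t₃), …` of the elements of a finite set
of reals, sorted increasingly. -/
noncomputable def consecPairs (α : Finset ℝ) : List (ℝ × ℝ) :=
  (α.sort (· ≤ ·)).zip (α.sort (· ≤ ·)).tail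

/-- The ordered product `g t₁ t₂ * g t₂ t₃ * ⋯ * g tₙ tₙ₊₁` over the consecutive points
`t₁ < t₂ < … < tₙ₊₁` of a partition, taken in increasing order. -/
noncomputable def partitionProd {A : Type*} [Ring A] (g : ℝ → ℝ → A) (α : Finset ℝ) : A :=
  ((consecPairs α).map fun p => g p.1 p.2).prod

/-- The sum `U t₁ t₂ + U t₂ t₃ + ⋯ + U tₙ tₙ₊₁` over the consecutive points of a
partition. -/
noncomputable def partitionSum {A : Type*} [Ring A] (U : ℝ → ℝ → A) (α : Finset ℝ) : A :=
  ((consecPairs α).map fun p => U p.1 p.2).sum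

/-- The mesh `max_i (t_{i+1} - t_i)` of a partition. -/
noncomputable def mesh (α : Finset ℝ) : ℝ :=
  ((consecPairs α).map fun p => p.2 - p.1).foldr max 0

/-- `IsNetLimit g r s u` means that the net `α ↦ partitionProd g α`, indexed by the
partitions of `[r, s]` partially ordered by inclusion, converges to `u`. -/
def IsNetLimit {A : Type*} [NormedRing A] (g : ℝ → ℝ → A) (r s : ℝ) (u : A) : Prop :=
  ∀ ε > 0, ∃ γ : Finset ℝ, IsPartition r s γ ∧
    ∀ α : Finset ℝ, IsPartition r s α → γ ⊆ α → ‖partitionProd g α - u‖ < ε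


open Filter Topology

namespace List

theorem zip_tail_append_cons {α : Type*} (l₁ l₂ : List α) (t : α) :
    (l₁ ++ t :: l₂).zip (l₁ ++ t :: l₂).tail =
      (l₁ ++ [t]).zip (l₁ ++ [t]).tail ++ (t :: l₂).zip l₂ := by
  induction l₁ with
  | nil => simp
  | cons x l₁ ih => cases l₁ <;> simp_all

theorem Pairwise.lt_and_forall_le_of_mem_zip_tail {α : Type*} [LinearOrder α] {l : List α}
    (hl : l.Pairwise (· < ·)) {t u : α} (h : (t, u) ∈ l.zip l.tail) :
    t < u ∧ ∀ x ∈ l, t < x → u ≤ x := by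
  induction l with
  | nil => simp at h
  | cons a l ih =>
    rcases l with _ | ⟨b, l⟩
    · simp at h
    · simp only [tail_cons, zip_cons_cons, mem_cons, Prod.mk.injEq] at h
      have ht : t ∈ a :: b :: l := by
        rcases h with ⟨rfl, -⟩ | h
        exacts [mem_cons_self, mem_cons_of_mem _ (of_mem_zip h).1]
      grind [pairwise_cons]

theorem sum_map_sub_zip_le {S : ℝ} (x : ℝ) (l : List ℝ) (hl : ∀ y ∈ x :: l, y ≤ S) :
    (((x :: l).zip l).map fun q => q.2 - q.1).sum ≤ S - x := by
  induction l generalizing x with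
  | nil => simpa using hl x mem_cons_self
  | cons y l ih =>
    have := ih y fun z hz => hl z (mem_cons_of_mem _ hz)
    simp only [zip_cons_cons, map_cons, sum_cons]
    linarith

theorem exists_orderedInsert_eq {α : Type*} [LinearOrder α] {l : List α}
    (hl : l.Pairwise (· < ·)) {p x y : α} (hp : p ∉ l) (hx : x ∈ l) (hxp : x < p)
    (hy : y ∈ l) (hpy : p < y) :
    ∃ l₁ t u l₂, t < p ∧ p < u ∧ l = l₁ ++ t :: u :: l₂ ∧
      l.orderedInsert (· ≤ ·) p = l₁ ++ t :: p :: u :: l₂ := by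
  induction l generalizing x y with
  | nil => simp at hx
  | cons a l ih =>
    have hap : a < p := by
      rcases mem_cons.1 hx with rfl | hx
      · exact hxp
      · exact ((pairwise_cons.1 hl).1 x hx).trans hxp
    rcases l with _ | ⟨b, l⟩
    · simp only [mem_cons, List.not_mem_nil, or_false] at hy
      exact absurd (hy ▸ hpy) (not_lt.2 hap.le)
    · have hb : b ≠ p := fun h => hp (h ▸ mem_cons_of_mem _ mem_cons_self)
      rcases hb.lt_or_gt with hbp | hpb
      · have hy' : y ∈ b :: l := (mem_cons.1 hy).resolve_left fun h => lt_asymm hap (h ▸ hpy)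
        obtain ⟨l₁, t, u, l₂, htp, hpu, hl', hins⟩ :=
          ih (pairwise_cons.1 hl).2 (fun h => hp (mem_cons_of_mem _ h)) mem_cons_self hbp hy' hpy
        refine ⟨a :: l₁, t, u, l₂, htp, hpu, by rw [hl']; rfl, ?_⟩
        rw [orderedInsert_of_not_le _ _ (not_le.2 hap), hins]
        rfl
      · exact ⟨[], a, b, l, hap, hpb, rfl, by simp [hap.not_ge, hpb.le]⟩

theorem norm_prod_map_one_add_le_exp {ι A : Type*} [NormedRing A] [NormOneClass A]
    (l : List ι) (f : ι → A) :
    ‖(l.map fun i => 1 + f i).prod‖ ≤ Real.exp (l.map fun i => ‖f i‖).sum := by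
  induction l with
  | nil => simp
  | cons i l ih =>
    have hi : ‖1 + f i‖ ≤ Real.exp ‖f i‖ := by
      calc ‖1 + f i‖ ≤ ‖(1 : A)‖ + ‖f i‖ := norm_add_le _ _
        _ = ‖f i‖ + 1 := by rw [norm_one, add_comm]
        _ ≤ Real.exp ‖f i‖ := Real.add_one_le_exp _
    rw [map_cons, prod_cons, map_cons, sum_cons, Real.exp_add]
    exact (norm_mul_le _ _).trans (mul_le_mul hi ih (norm_nonneg _) (Real.exp_pos _).le)

end List

theorem Finset.sort_insert_eq_orderedInsert {α : Type*} [LinearOrder α] (s : Finset α) {p : α}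
    (hp : p ∉ s) : (insert p s).sort (· ≤ ·) = (s.sort (· ≤ ·)).orderedInsert (· ≤ ·) p := by
  have hnodup : ((s.sort (· ≤ ·)).orderedInsert (· ≤ ·) p).Nodup :=
    (List.perm_orderedInsert _ p _).nodup_iff.2
      (List.nodup_cons.2 ⟨by simpa using hp, s.sort_nodup _⟩)
  have hset : insert p s = ((s.sort (· ≤ ·)).orderedInsert (· ≤ ·) p).toFinset := by
    ext x; simp
  rw [hset]
  exact (List.toFinset_sort _ hnodup).2 ((s.pairwise_sort _).orderedInsert _ _)

theorem IsPartition.union_left {R S : ℝ} {α s : Finset ℝ} (hα : IsPartition R S α)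
    (hs : ∀ t ∈ s, R ≤ t ∧ t ≤ S) : IsPartition R S (s ∪ α) := by
  refine ⟨Finset.mem_union_right _ hα.1, Finset.mem_union_right _ hα.2.1, fun t ht => ?_⟩
  rcases Finset.mem_union.1 ht with ht | ht
  exacts [hs t ht, hα.2.2 t ht]

theorem isPartition_pair {R S : ℝ} (hRS : R ≤ S) : IsPartition R S {R, S} := by
  refine ⟨by simp, by simp, fun t ht => ?_⟩
  rcases Finset.mem_insert.1 ht with rfl | ht
  · exact ⟨le_rfl, hRS⟩
  · rw [Finset.mem_singleton.1 ht]; exact ⟨hRS, le_rfl⟩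

theorem of_mem_consecPairs {β : Finset ℝ} {q : ℝ × ℝ} (h : q ∈ consecPairs β) :
    q.1 ∈ β ∧ q.2 ∈ β ∧ q.1 < q.2 ∧ ∀ x ∈ β, q.1 < x → q.2 ≤ x := by
  have hsort := (β.sortedLT_sort).pairwise
  obtain ⟨hlt, hle⟩ := hsort.lt_and_forall_le_of_mem_zip_tail h
  obtain ⟨h₁, h₂⟩ := List.of_mem_zip h
  exact ⟨(β.mem_sort _).1 h₁, (β.mem_sort _).1 (List.mem_of_mem_tail h₂), hlt,
    fun x hx => hle x ((β.mem_sort _).2 hx)⟩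

theorem partitionSum_sub_le {R S : ℝ} {β : Finset ℝ} (hβ : IsPartition R S β) :
    partitionSum (fun r s => s - r) β ≤ S - R := by
  obtain ⟨x, l, hxl⟩ := List.exists_cons_of_ne_nil
    (List.ne_nil_of_mem ((β.mem_sort (· ≤ ·)).2 hβ.1))
  have hmem : ∀ y ∈ x :: l, R ≤ y ∧ y ≤ S := fun y hy => hβ.2.2 y ((β.mem_sort _).1 (hxl ▸ hy))
  have := List.sum_map_sub_zip_le x l fun y hy => (hmem y hy).2
  simp only [partitionSum, consecPairs, hxl, List.tail_cons]
  linarith [(hmem x List.mem_cons_self).1]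

theorem partitionSum_sq_nonneg (β : Finset ℝ) : 0 ≤ partitionSum (fun r s => (s - r) ^ 2) β :=
  List.sum_nonneg fun _ hx => by
    obtain ⟨q, -, rfl⟩ := List.mem_map.1 hx
    positivity

theorem partitionSum_sq_le_of_forall_sub_le {R S h : ℝ} {β : Finset ℝ} (hβ : IsPartition R S β)
    (h0 : 0 ≤ h) (hh : ∀ q ∈ consecPairs β, q.2 - q.1 ≤ h) :
    partitionSum (fun r s => (s - r) ^ 2) β ≤ h * (S - R) := by
  have hsq : ∀ q ∈ consecPairs β, (q.2 - q.1) ^ 2 ≤ h * (q.2 - q.1) := fun q hq => by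
    have := (of_mem_consecPairs hq).2.2.1
    rw [sq]; exact mul_le_mul_of_nonneg_right (hh q hq) (by linarith)
  calc partitionSum (fun r s => (s - r) ^ 2) β
      ≤ ((consecPairs β).map fun q => h * (q.2 - q.1)).sum := List.sum_le_sum hsq
    _ = h * partitionSum (fun r s => s - r) β := by rw [List.sum_map_mul_left]; rfl
    _ ≤ h * (S - R) := mul_le_mul_of_nonneg_left (partitionSum_sub_le hβ) h0

theorem exists_isPartition_forall_sub_le {R S h : ℝ} (hRS : R < S) (hh : 0 < h) :
    ∃ γ, IsPartition R S γ ∧ ∀ q ∈ consecPairs γ, q.2 - q.1 ≤ h := by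
  obtain ⟨n, hn⟩ := exists_nat_gt ((S - R) / h)
  set δ := (S - R) / (n + 1) with hδ
  have hδ0 : 0 < δ := div_pos (by linarith) (by positivity)
  have hδh : δ ≤ h := by
    rw [hδ, div_le_iff₀ (by positivity)]
    rw [div_lt_iff₀ hh] at hn
    nlinarith
  have hS : R + ((n + 1 : ℕ) : ℝ) * δ = S := by
    rw [hδ]; push_cast; field_simp; ring
  have hgrid : ∀ t, t ∈ (Finset.range (n + 2)).image (fun i : ℕ => R + i * δ) ↔
      ∃ i : ℕ, i ≤ n + 1 ∧ R + i * δ = t := by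
    intro t; simp only [Finset.mem_image, Finset.mem_range, Nat.lt_succ_iff]
  refine ⟨(Finset.range (n + 2)).image (fun i : ℕ => R + i * δ), ⟨?_, ?_, ?_⟩, ?_⟩
  · exact (hgrid R).2 ⟨0, by omega, by simp⟩
  · exact (hgrid S).2 ⟨n + 1, le_rfl, hS⟩
  · intro t ht
    obtain ⟨i, hi, rfl⟩ := (hgrid t).1 ht
    have : (i : ℝ) * δ ≤ ((n + 1 : ℕ) : ℝ) * δ := by gcongr
    constructor <;> nlinarith
  · intro q hq
    obtain ⟨h₁, h₂, hlt, hnext⟩ := of_mem_consecPairs hq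
    obtain ⟨i, hi, hqi⟩ := (hgrid q.1).1 h₁
    obtain ⟨j, hj, hqj⟩ := (hgrid q.2).1 h₂
    have hij : (i : ℝ) * δ < ((n + 1 : ℕ) : ℝ) * δ := by
      have : (j : ℝ) * δ ≤ ((n + 1 : ℕ) : ℝ) * δ := by gcongr
      linarith
    have hi' : i + 1 ≤ n + 1 := by
      have := lt_of_mul_lt_mul_right hij hδ0.le
      exact_mod_cast this
    have := hnext _ ((hgrid _).2 ⟨i + 1, hi', rfl⟩) (by rw [← hqi]; push_cast; linarith)
    push_cast at this
    linarith

theorem consecPairs_insert {β : Finset ℝ} {p x y : ℝ} (hp : p ∉ β) (hx : x ∈ β) (hxp : x < p)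
    (hy : y ∈ β) (hpy : p < y) :
    ∃ X Y t u, t < p ∧ p < u ∧ consecPairs β = X ++ (t, u) :: Y ∧
      consecPairs (insert p β) = X ++ (t, p) :: (p, u) :: Y := by
  obtain ⟨l₁, t, u, l₂, htp, hpu, hl, hins⟩ := List.exists_orderedInsert_eq
    β.sortedLT_sort.pairwise (by simpa using hp) ((β.mem_sort _).2 hx) hxp
    ((β.mem_sort _).2 hy) hpy
  refine ⟨(l₁ ++ [t]).zip (l₁ ++ [t]).tail, (u :: l₂).zip l₂, t, u, htp, hpu, ?_, ?_⟩
  · rw [consecPairs, hl, List.zip_tail_append_cons]; rfl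
  · rw [consecPairs, β.sort_insert_eq_orderedInsert hp, hins, List.zip_tail_append_cons]; rfl

section ProductEstimates

variable {A : Type*} [NormedRing A] [NormOneClass A] {R S C : ℝ} {a : ℝ → ℝ → A}

theorem norm_prod_sublist_consecPairs_le (hC : 0 ≤ C)
    (ha_norm : ∀ r s, R ≤ r → r ≤ s → s ≤ S → ‖a r s‖ ≤ (s - r) * C)
    {β : Finset ℝ} (hβ : IsPartition R S β) {Q : List (ℝ × ℝ)} (hQ : Q.Sublist (consecPairs β)) :
    ‖(Q.map fun q => 1 + a q.1 q.2).prod‖ ≤ Real.exp (C * (S - R)) := by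
  refine (Q.norm_prod_map_one_add_le_exp _).trans (Real.exp_le_exp.2 ?_)
  have hgap : ∀ q ∈ consecPairs β, R ≤ q.1 ∧ q.1 < q.2 ∧ q.2 ≤ S := fun q hq => by
    obtain ⟨h₁, h₂, hlt, -⟩ := of_mem_consecPairs hq
    exact ⟨(hβ.2.2 _ h₁).1, hlt, (hβ.2.2 _ h₂).2⟩
  calc (Q.map fun q => ‖a q.1 q.2‖).sum ≤ (Q.map fun q => C * (q.2 - q.1)).sum :=
        List.sum_le_sum fun q hq => by
          obtain ⟨h₁, h₂, h₃⟩ := hgap q (hQ.subset hq)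
          linarith [ha_norm q.1 q.2 h₁ h₂.le h₃]
    _ = C * (Q.map fun q => q.2 - q.1).sum := List.sum_map_mul_left _ _ _
    _ ≤ C * (S - R) := by
      refine mul_le_mul_of_nonneg_left (le_trans ?_ (partitionSum_sub_le hβ)) hC
      refine (hQ.map _).sum_le_sum fun d hd => ?_
      obtain ⟨q, hq, rfl⟩ := List.mem_map.1 hd
      linarith [(hgap q hq).2.1]

theorem norm_partitionProd_insert_sub_le (hC : 0 ≤ C)
    (ha_norm : ∀ r s, R ≤ r → r ≤ s → s ≤ S → ‖a r s‖ ≤ (s - r) * C)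
    (ha_add : ∀ r s t, R ≤ r → r < s → s < t → t ≤ S → a r t = a r s + a s t)
    {β : Finset ℝ} (hβ : IsPartition R S β) {p : ℝ} (hp : R ≤ p ∧ p ≤ S) (hpβ : p ∉ β) :
    ‖partitionProd (fun r s => 1 + a r s) (insert p β) - partitionProd (fun r s => 1 + a r s) β‖
      ≤ C ^ 2 * Real.exp (2 * C * (S - R)) / 2 *
        (partitionSum (fun r s => (s - r) ^ 2) β -
          partitionSum (fun r s => (s - r) ^ 2) (insert p β)) := by
  have hRp : R < p := hp.1.lt_of_ne fun h => hpβ (h ▸ hβ.1)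
  have hpS : p < S := hp.2.lt_of_ne fun h => hpβ (h ▸ hβ.2.1)
  obtain ⟨X, Y, t, u, htp, hpu, hβXY, hinsXY⟩ := consecPairs_insert hpβ hβ.1 hRp hβ.2.1 hpS
  obtain ⟨ht, hu, -, -⟩ := of_mem_consecPairs (hβXY ▸ List.mem_append_right X List.mem_cons_self :
    (t, u) ∈ consecPairs β)
  have hRt := (hβ.2.2 t ht).1
  have huS := (hβ.2.2 u hu).2
  have hX : X.Sublist (consecPairs β) := hβXY ▸ (List.prefix_append _ _).sublist
  have hY : Y.Sublist (consecPairs β) :=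
    hβXY ▸ ((List.sublist_cons_self _ _).trans (List.sublist_append_right _ _))
  set prodX := (X.map fun q => 1 + a q.1 q.2).prod
  set prodY := (Y.map fun q => 1 + a q.1 q.2).prod
  have hprod : partitionProd (fun r s => 1 + a r s) (insert p β) -
      partitionProd (fun r s => 1 + a r s) β = prodX * (a t p * a p u) * prodY := by
    simp only [partitionProd, hβXY, hinsXY, List.map_append, List.map_cons, List.prod_append,
      List.prod_cons, ha_add t p u hRt htp hpu huS]
    noncomm_ring
  have hsum : partitionSum (fun r s => (s - r) ^ 2) β -
      partitionSum (fun r s => (s - r) ^ 2) (insert p β) = 2 * ((p - t) * (u - p)) := by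
    simp only [partitionSum, hβXY, hinsXY, List.map_append, List.map_cons, List.sum_append,
      List.sum_cons]
    ring
  rw [hprod, hsum]
  calc ‖prodX * (a t p * a p u) * prodY‖ ≤ ‖prodX‖ * (‖a t p‖ * ‖a p u‖) * ‖prodY‖ := by
        refine (norm_mul_le _ _).trans (mul_le_mul_of_nonneg_right ?_ (norm_nonneg _))
        exact (norm_mul_le _ _).trans (mul_le_mul_of_nonneg_left (norm_mul_le _ _) (norm_nonneg _))
    _ ≤ Real.exp (C * (S - R)) * ((p - t) * C * ((u - p) * C)) * Real.exp (C * (S - R)) := by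
        gcongr
        · exact norm_prod_sublist_consecPairs_le hC ha_norm hβ hX
        · exact ha_norm t p hRt htp.le hpS.le
        · exact ha_norm p u hRp.le hpu.le huS
        · exact norm_prod_sublist_consecPairs_le hC ha_norm hβ hY
    _ = C ^ 2 * Real.exp (2 * C * (S - R)) / 2 * (2 * ((p - t) * (u - p))) := by
        rw [show 2 * C * (S - R) = C * (S - R) + C * (S - R) by ring, Real.exp_add]
        ring

theorem norm_partitionProd_sub_le_of_subset (hC : 0 ≤ C)
    (ha_norm : ∀ r s, R ≤ r → r ≤ s → s ≤ S → ‖a r s‖ ≤ (s - r) * C)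
    (ha_add : ∀ r s t, R ≤ r → r < s → s < t → t ≤ S → a r t = a r s + a s t)
    {α β : Finset ℝ} (hα : IsPartition R S α) (hβ : IsPartition R S β) (hαβ : α ⊆ β) :
    ‖partitionProd (fun r s => 1 + a r s) β - partitionProd (fun r s => 1 + a r s) α‖
      ≤ C ^ 2 * Real.exp (2 * C * (S - R)) / 2 *
        (partitionSum (fun r s => (s - r) ^ 2) α - partitionSum (fun r s => (s - r) ^ 2) β) := by
  set Θ := partitionProd (fun r s => 1 + a r s)
  set E := partitionSum (fun r s => (s - r) ^ 2)
  set K := C ^ 2 * Real.exp (2 * C * (S - R)) / 2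
  suffices key : ∀ s : Finset ℝ, (∀ t ∈ s, R ≤ t ∧ t ≤ S) →
      ‖Θ (s ∪ α) - Θ α‖ ≤ K * (E α - E (s ∪ α)) by
    simpa [Finset.sdiff_union_of_subset hαβ] using
      key (β \ α) fun t ht => hβ.2.2 t (Finset.sdiff_subset ht)
  intro s
  induction s using Finset.induction_on with
  | empty => simp
  | insert p s _ ih =>
    intro hs
    have hs' : ∀ t ∈ s, R ≤ t ∧ t ≤ S := fun t ht => hs t (Finset.mem_insert_of_mem ht)
    rw [Finset.insert_union]
    by_cases hp : p ∈ s ∪ α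
    · rw [Finset.insert_eq_of_mem hp]; exact ih hs'
    calc ‖Θ (insert p (s ∪ α)) - Θ α‖
        ≤ ‖Θ (insert p (s ∪ α)) - Θ (s ∪ α)‖ + ‖Θ (s ∪ α) - Θ α‖ :=
          norm_sub_le_norm_sub_add_norm_sub _ _ _
      _ ≤ K * (E (s ∪ α) - E (insert p (s ∪ α))) + K * (E α - E (s ∪ α)) :=
          add_le_add (norm_partitionProd_insert_sub_le hC ha_norm ha_add (hα.union_left hs')
            (hs p (Finset.mem_insert_self _ _)) hp) (ih hs')
      _ = K * (E α - E (insert p (s ∪ α))) := by ring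

end ProductEstimates

def refinementFilter (R S : ℝ) : Filter (Finset ℝ) :=
  ⨅ (γ) (_ : IsPartition R S γ), 𝓟 {α | IsPartition R S α ∧ γ ⊆ α}

theorem hasBasis_refinementFilter {R S : ℝ} (hRS : R ≤ S) :
    (refinementFilter R S).HasBasis (IsPartition R S) fun γ => {α | IsPartition R S α ∧ γ ⊆ α} :=
  hasBasis_biInf_principal'
    (fun γ₁ h₁ γ₂ h₂ => ⟨γ₁ ∪ γ₂, h₂.union_left h₁.2.2,
      fun _ hα => ⟨hα.1, Finset.union_subset_left hα.2⟩,
      fun _ hα => ⟨hα.1, Finset.union_subset_right hα.2⟩⟩)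
    ⟨{R, S}, isPartition_pair hRS⟩

theorem isNetLimit_iff_tendsto {A : Type*} [NormedRing A] {g : ℝ → ℝ → A} {R S : ℝ} {u : A}
    (hRS : R ≤ S) :
    IsNetLimit g R S u ↔ Tendsto (partitionProd g) (refinementFilter R S) (𝓝 u) := by
  rw [(hasBasis_refinementFilter hRS).tendsto_iff Metric.nhds_basis_ball]
  simp [IsNetLimit, dist_eq_norm]

theorem exists_isNetLimit_of_cauchy {A : Type*} [NormedRing A] [CompleteSpace A]
    {g : ℝ → ℝ → A} {R S : ℝ} (hRS : R ≤ S)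
    (h : ∀ ε > 0, ∃ γ, IsPartition R S γ ∧ ∀ α β, IsPartition R S α → γ ⊆ α →
      IsPartition R S β → γ ⊆ β → ‖partitionProd g α - partitionProd g β‖ < ε) :
    ∃ u, IsNetLimit g R S u := by
  have hb := (hasBasis_refinementFilter hRS).map (partitionProd g)
  have hcauchy : Cauchy (map (partitionProd g) (refinementFilter R S)) := by
    refine Metric.cauchy_iff.2 ⟨hb.neBot_iff.2 fun hγ => ⟨_, _, ⟨hγ, subset_rfl⟩, rfl⟩,
      fun ε hε => ?_⟩
    obtain ⟨γ, hγ, hγε⟩ := h ε hε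
    refine ⟨_, hb.mem_of_mem hγ, ?_⟩
    rintro _ ⟨α, ⟨hα, hγα⟩, rfl⟩ _ ⟨β, ⟨hβ, hγβ⟩, rfl⟩
    rw [dist_eq_norm]
    exact hγε α β hα hγα hβ hγβ
  obtain ⟨u, hu⟩ := CompleteSpace.complete hcauchy
  exact ⟨u, (isNetLimit_iff_tendsto hRS).2 hu⟩

theorem stmt_8_general {A : Type*} [NormedRing A] [NormOneClass A]
    [CompleteSpace A]
    (R S C : ℝ) (hRS : R < S) (hC : 0 < C)
    (a : ℝ → ℝ → A)
    (ha_norm : ∀ r s, R ≤ r → r ≤ s → s ≤ S → ‖a r s‖ ≤ (s - r) * C)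
    (ha_add : ∀ r s t, R ≤ r → r < s → s < t → t ≤ S → a r t = a r s + a s t) :
    ∃ U : A, IsNetLimit (fun r s => (1 : A) + a r s) R S U := by
  set Θ := partitionProd (fun r s => 1 + a r s)
  set K := C ^ 2 * Real.exp (2 * C * (S - R)) / 2
  have hK : 0 < K := by positivity
  refine exists_isNetLimit_of_cauchy hRS.le fun ε hε => ?_
  obtain ⟨γ, hγ, hgap⟩ := exists_isPartition_forall_sub_le hRS
    (div_pos hε (by positivity : 0 < 4 * K * (S - R)))
  have hEγ := partitionSum_sq_le_of_forall_sub_le hγ (by positivity) hgap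
  have hclose : ∀ α, IsPartition R S α → γ ⊆ α → ‖Θ α - Θ γ‖ ≤ ε / 4 := fun α hα hγα => by
    refine (norm_partitionProd_sub_le_of_subset hC.le ha_norm ha_add hγ hα hγα).trans ?_
    calc K * (_ - _) ≤ K * (ε / (4 * K * (S - R)) * (S - R)) := by
          gcongr; linarith [partitionSum_sq_nonneg α]
      _ = ε / 4 := by field_simp [(sub_pos.2 hRS).ne']
  refine ⟨γ, hγ, fun α β hα hγα hβ hγβ => ?_⟩
  calc ‖Θ α - Θ β‖ ≤ ‖Θ α - Θ γ‖ + ‖Θ β - Θ γ‖ := by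
        simpa only [dist_eq_norm] using dist_triangle_right (Θ α) (Θ β) (Θ γ)
    _ ≤ ε / 4 + ε / 4 := add_le_add (hclose α hα hγα) (hclose β hβ hγβ)
    _ < ε := by linarith

/-- in a Banach algebra the net of ordered products `Θ_α` over partitions
of `[R, S]` converges. -/
theorem stmt_8 {A : Type*} [NormedRing A] [NormOneClass A] [NormedAlgebra ℂ A]
    [CompleteSpace A]
    (R S C : ℝ) (hR : 0 ≤ R) (hRS : R < S) (hC : 0 < C)
    (a : ℝ → ℝ → A)
    (ha_norm : ∀ r s, R ≤ r → r ≤ s → s ≤ S → ‖a r s‖ ≤ (s - r) * C)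
    (ha_add : ∀ r s t, R ≤ r → r < s → s < t → t ≤ S → a r t = a r s + a s t) :
    ∃ U : A, IsNetLimit (fun r s => (1 : A) + a r s) R S U :=
  stmt_8_general R S C hRS hC a ha_norm ha_add
end

section
/- Let A be a complete normed unital algebra (Banach algebra) with submultiplicative norm and ‖1‖ = 1, C > 0, and let (a_{r,s})_{0 ≤ r ≤ s} be a family of elements of A such that ‖a_{r,s}‖ ≤ (s − r)·C for all r ≤ s and a_{r,t} = a_{r,s} + a_{s,t} whenever r < s < t. Set g_{r,s} := 1 + a_{r,s} and let U_{r,s} denote the limit of the net of ordered products Θ_α over partitions α of [r,s]. Then for all 0 ≤ r < s one has ‖U_{r,s} − g_{r,s}‖ ≤ (1/2)·(s − r)²·C²·exp(C·(s − r)). -/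
/-!
Since `a` is additive, for a partition with increments `aᵢ = a_{tᵢ,tᵢ₊₁}` we have
`Θ_α - g_{r,s} = ∏ (1 + aᵢ) - 1 - ∑ aᵢ`, the sum of all products of at least two increments.
Peeling off one factor at a time bounds its norm by `T² / 2 · exp T` with `T = ∑ ‖aᵢ‖`,
and `T ≤ C (s - r)`. The bound is uniform in `α`, so it passes to the limit `U_{r,s}`.
-/

section ProductExpansion

variable {A : Type*} [NormedRing A] [NormOneClass A]

theorem norm_prod_map_one_add_le_exp (xs : List A) :
    ‖(xs.map (1 + ·)).prod‖ ≤ Real.exp (xs.map norm).sum := by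
  induction xs with
  | nil => simp
  | cons x xs ih =>
    rw [List.map_cons, List.prod_cons, List.map_cons, List.sum_cons, Real.exp_add]
    have hx : ‖1 + x‖ ≤ Real.exp ‖x‖ :=
      (norm_add_le _ _).trans (by rw [norm_one, add_comm]; exact Real.add_one_le_exp _)
    exact (norm_mul_le _ _).trans (by gcongr)

theorem norm_prod_map_one_add_sub_one_le (xs : List A) :
    ‖(xs.map (1 + ·)).prod - 1‖ ≤ (xs.map norm).sum * Real.exp (xs.map norm).sum := by
  induction xs with
  | nil => simp
  | cons x xs ih =>
    set P := (xs.map (1 + ·)).prod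
    set T := (xs.map norm).sum
    have hT : 0 ≤ T := List.sum_nonneg (by simp)
    have hP : ‖P‖ ≤ Real.exp T := norm_prod_map_one_add_le_exp xs
    rw [List.map_cons, List.prod_cons, List.map_cons, List.sum_cons,
      show (1 + x) * P - 1 = (P - 1) + x * P by noncomm_ring]
    calc ‖(P - 1) + x * P‖ ≤ T * Real.exp T + ‖x‖ * Real.exp T :=
          (norm_add_le _ _).trans (add_le_add ih ((norm_mul_le _ _).trans (by gcongr)))
      _ ≤ (‖x‖ + T) * Real.exp (‖x‖ + T) := by
          rw [add_mul, add_comm (‖x‖ * _)]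
          gcongr <;> simp

theorem norm_prod_map_one_add_sub_one_sub_sum_le (xs : List A) :
    ‖(xs.map (1 + ·)).prod - 1 - xs.sum‖ ≤
      (xs.map norm).sum ^ 2 / 2 * Real.exp (xs.map norm).sum := by
  induction xs with
  | nil => simp
  | cons x xs ih =>
    set P := (xs.map (1 + ·)).prod
    set T := (xs.map norm).sum
    have hP : ‖P - 1‖ ≤ T * Real.exp T := norm_prod_map_one_add_sub_one_le xs
    rw [List.map_cons, List.prod_cons, List.map_cons, List.sum_cons, List.sum_cons,
      show (1 + x) * P - 1 - (x + xs.sum) = (P - 1 - xs.sum) + x * (P - 1) by noncomm_ring]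
    calc ‖(P - 1 - xs.sum) + x * (P - 1)‖
        ≤ T ^ 2 / 2 * Real.exp T + ‖x‖ * (T * Real.exp T) :=
          (norm_add_le _ _).trans (add_le_add ih ((norm_mul_le _ _).trans (by gcongr)))
      _ = (T ^ 2 / 2 + ‖x‖ * T) * Real.exp T := by ring
      _ ≤ (‖x‖ + T) ^ 2 / 2 * Real.exp (‖x‖ + T) :=
          mul_le_mul (by nlinarith [sq_nonneg ‖x‖]) (by simp) (Real.exp_pos _).le (by positivity)

end ProductExpansion

namespace List

variable {ι M : Type*}

theorem Pairwise.rel_of_mem_zip_tail {R : ι → ι → Prop} :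
    ∀ {l : List ι}, l.Pairwise R → ∀ p ∈ l.zip l.tail, R p.1 p.2
  | [], _, _, hp => by simp at hp
  | [_], _, _, hp => by simp at hp
  | x :: y :: l, hl, p, hp => by
    rw [tail_cons, zip_cons_cons, mem_cons] at hp
    rcases hp with rfl | hp
    · exact rel_of_pairwise_cons hl mem_cons_self
    · exact hl.of_cons.rel_of_mem_zip_tail p hp

theorem Pairwise.sum_map_zip_eq_of_additive [Preorder ι] [AddMonoid M] (f : ι → ι → M) :
    ∀ {x : ι} {l : List ι}, (x :: l).Pairwise (· < ·) → (hl : l ≠ []) →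
      (∀ u v w, x ≤ u → u < v → v < w → f u w = f u v + f v w) →
      (((x :: l).zip l).map fun p => f p.1 p.2).sum = f x (l.getLast hl)
  | _, [], _, hl, _ => absurd rfl hl
  | x, [y], _, _, _ => by simp
  | x, y :: z :: l, hxl, _, hf => by
    have hxy : x < y := rel_of_pairwise_cons hxl mem_cons_self
    have hyl : y < (z :: l).getLast (cons_ne_nil _ _) :=
      rel_of_pairwise_cons hxl.of_cons (getLast_mem _)
    rw [zip_cons_cons, map_cons, sum_cons,
      sum_map_zip_eq_of_additive f hxl.of_cons (cons_ne_nil _ _) fun u v w hyu ↦ hf u v w (hxy.le.trans hyu),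
      getLast_cons (cons_ne_nil _ _), hf x y _ le_rfl hxy hyl]

end List

section Partition

variable {r s : ℝ} {α : Finset ℝ}

theorem IsPartition.exists_sort_eq_cons (hα : IsPartition r s α) (hrs : r < s) :
    ∃ l : List ℝ, ∃ hl : l ≠ [], α.sort (· ≤ ·) = r :: l ∧ l.getLast hl = s := by
  obtain ⟨hr, hs, hbounds⟩ := hα
  have hlt := (Finset.sortedLT_sort α).pairwise
  have hle := Finset.pairwise_sort α (· ≤ ·)
  have hmem : ∀ t, t ∈ α.sort (· ≤ ·) ↔ t ∈ α := fun t ↦ Finset.mem_sort _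
  rcases hsort : α.sort (· ≤ ·) with _ | ⟨x, l⟩
  · simpa [hsort] using (hmem r).2 hr
  rw [hsort] at hlt hle hmem
  have hxr : x = r := by
    refine le_antisymm ?_ (hbounds x ((hmem x).1 List.mem_cons_self)).1
    rcases List.mem_cons.1 ((hmem r).2 hr) with h | h
    · exact h.ge
    · exact (List.rel_of_pairwise_cons hlt h).le
  have hsl : s ∈ l := by
    rcases List.mem_cons.1 ((hmem s).2 hs) with h | h
    · exact absurd (h.trans hxr) hrs.ne'
    · exact h
  have hl : l ≠ [] := List.ne_nil_of_mem hsl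
  refine ⟨l, hl, hxr ▸ rfl, le_antisymm ?_ ?_⟩
  · exact (hbounds _ ((hmem _).1 (List.mem_cons_of_mem _ (List.getLast_mem hl)))).2
  · exact hle.of_cons.rel_getLast hsl

theorem IsPartition.le_fst_lt_snd_of_mem_consecPairs (hα : IsPartition r s α) {p : ℝ × ℝ}
    (hp : p ∈ consecPairs α) : r ≤ p.1 ∧ p.1 < p.2 :=
  ⟨(hα.2.2 p.1 ((Finset.mem_sort _).1 (List.of_mem_zip hp).1)).1,
    (Finset.sortedLT_sort α).pairwise.rel_of_mem_zip_tail p hp⟩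

theorem IsPartition.partitionSum_eq {A : Type*} [Ring A] (hα : IsPartition r s α) (hrs : r < s)
    (f : ℝ → ℝ → A) (hf : ∀ u v w, r ≤ u → u < v → v < w → f u w = f u v + f v w) :
    partitionSum f α = f r s := by
  obtain ⟨l, hl, hsort, rfl⟩ := hα.exists_sort_eq_cons hrs
  rw [partitionSum, consecPairs, hsort, List.tail_cons]
  exact (hsort ▸ (Finset.sortedLT_sort α).pairwise).sum_map_zip_eq_of_additive f hl hf

end Partition

theorem IsPartition.norm_partitionProd_one_add_sub_le {A : Type*} [NormedRing A] [NormOneClass A]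
    {r s C : ℝ} {a : ℝ → ℝ → A} {α : Finset ℝ}
    (ha_norm : ∀ u v, r ≤ u → u ≤ v → ‖a u v‖ ≤ (v - u) * C)
    (ha_add : ∀ u v w, r ≤ u → u < v → v < w → a u w = a u v + a v w)
    (hα : IsPartition r s α) (hrs : r < s) :
    ‖partitionProd (fun p q => 1 + a p q) α - (1 + a r s)‖ ≤
      (1 / 2) * (s - r) ^ 2 * C ^ 2 * Real.exp (C * (s - r)) := by
  set xs := (consecPairs α).map fun p => a p.1 p.2
  have hprod : partitionProd (fun p q => 1 + a p q) α = (xs.map (1 + ·)).prod := by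
    rw [partitionProd, List.map_map]; rfl
  have hsum : xs.sum = a r s := hα.partitionSum_eq hrs a ha_add
  have hT : 0 ≤ (xs.map norm).sum := List.sum_nonneg (by simp)
  have hTC : (xs.map norm).sum ≤ C * (s - r) :=
    calc (xs.map norm).sum = ((consecPairs α).map fun p => ‖a p.1 p.2‖).sum := by
          rw [List.map_map]; rfl
      _ ≤ partitionSum (fun u v => (v - u) * C) α := List.sum_le_sum fun p hp ↦
          ha_norm _ _ (hα.le_fst_lt_snd_of_mem_consecPairs hp).1 (hα.le_fst_lt_snd_of_mem_consecPairs hp).2.le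
      _ = C * (s - r) := by
          rw [hα.partitionSum_eq hrs _ fun u v w _ _ _ ↦ by ring, mul_comm]
  rw [hprod, ← hsum, ← sub_sub]
  calc ‖(xs.map (1 + ·)).prod - 1 - xs.sum‖
      ≤ (xs.map norm).sum ^ 2 / 2 * Real.exp (xs.map norm).sum :=
        norm_prod_map_one_add_sub_one_sub_sum_le xs
    _ ≤ (C * (s - r)) ^ 2 / 2 * Real.exp (C * (s - r)) := by gcongr
    _ = (1 / 2) * (s - r) ^ 2 * C ^ 2 * Real.exp (C * (s - r)) := by ring

theorem IsNetLimit.norm_sub_le {A : Type*} [NormedRing A] {g : ℝ → ℝ → A} {r s : ℝ} {u : A}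
    (hu : IsNetLimit g r s u) (v : A) {B : ℝ}
    (hB : ∀ α, IsPartition r s α → ‖partitionProd g α - v‖ ≤ B) : ‖u - v‖ ≤ B := by
  refine le_of_forall_pos_lt_add fun ε hε ↦ ?_
  obtain ⟨γ, hγ, hlim⟩ := hu ε hε
  calc ‖u - v‖ ≤ ‖partitionProd g γ - u‖ + ‖partitionProd g γ - v‖ := by
        rw [norm_sub_rev _ u]; exact norm_sub_le_norm_sub_add_norm_sub _ _ _
    _ < B + ε := by linarith [hlim γ hγ subset_rfl, hB γ hγ]

theorem stmt_11_general {A : Type*} [NormedRing A] [NormOneClass A]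
    (C : ℝ)
    (a : ℝ → ℝ → A)
    (ha_norm : ∀ r s, 0 ≤ r → r ≤ s → ‖a r s‖ ≤ (s - r) * C)
    (ha_add : ∀ r s t, 0 ≤ r → r < s → s < t → a r t = a r s + a s t)
    (U : ℝ → ℝ → A)
    (hU : ∀ r s, 0 ≤ r → r < s → IsNetLimit (fun p q => (1 : A) + a p q) r s (U r s)) :
    ∀ r s, 0 ≤ r → r < s →
      ‖U r s - (1 + a r s)‖ ≤ (1 / 2) * (s - r) ^ 2 * C ^ 2 * Real.exp (C * (s - r)) := by
  intro r s hr hrs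
  exact (hU r s hr hrs).norm_sub_le _ fun α hα ↦
    hα.norm_partitionProd_one_add_sub_le (fun u v hu ↦ ha_norm u v (hr.trans hu))
      (fun u v w hu ↦ ha_add u v w (hr.trans hu)) hrs

/-- the estimate `‖U_{r,s} - g_{r,s}‖ ≤ (1/2)·(s - r)²·C²·exp(C·(s - r))`. -/
theorem stmt_11 {A : Type*} [NormedRing A] [NormOneClass A] [NormedAlgebra ℂ A]
    [CompleteSpace A]
    (C : ℝ) (hC : 0 < C)
    (a : ℝ → ℝ → A)
    (ha_norm : ∀ r s, 0 ≤ r → r ≤ s → ‖a r s‖ ≤ (s - r) * C)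
    (ha_add : ∀ r s t, 0 ≤ r → r < s → s < t → a r t = a r s + a s t)
    (U : ℝ → ℝ → A)
    (hU : ∀ r s, 0 ≤ r → r < s → IsNetLimit (fun p q => (1 : A) + a p q) r s (U r s)) :
    ∀ r s, 0 ≤ r → r < s →
      ‖U r s - (1 + a r s)‖ ≤ (1 / 2) * (s - r) ^ 2 * C ^ 2 * Real.exp (C * (s - r)) :=
  stmt_11_general C a ha_norm ha_add U hU
end

section
/- Let A be a complete normed unital algebra (Banach algebra) with submultiplicative norm and ‖1‖ = 1, let x ∈ A, and let (R_t)_{t ≥ 0} be a family of elements of A with R_0 = 0 for which there exist constants C ≥ 0 and ε > 0 such that ‖R_t‖ ≤ t²·C for all 0 ≤ t ≤ ε. Define k_t := 1 + t·x + R_t for t ≥ 0. Then for all 0 ≤ S < T the net α ↦ k_{t₂−t₁}·k_{t₃−t₂}·⋯·k_{t_{n+1}−t_n}, indexed by the partitions α = {S = t₁ < t₂ < … < t_{n+1} = T} of [S,T] partially ordered by inclusion, converges in norm to exp((T − S)·x), the exponential of (T − S)·x in A. -/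
namespace List

variable {α : Type*}

theorem sum_map_sub_zip_cons_self [AddCommGroup α] (a : α) :
    ∀ l : List α, (((a :: l).zip l).map fun p => p.2 - p.1).sum = l.getLastD a - a
  | [] => by simp
  | b :: l => by
    rw [zip_cons_cons, map_cons, sum_cons, sum_map_sub_zip_cons_self b l, getLastD_cons]
    abel

theorem prod_map_zip_cons_self_of_map_add {G M : Type*} [AddCommGroup G] [Monoid M]
    (e : G → M) (he0 : e 0 = 1) (he : ∀ s t, e (s + t) = e s * e t) (a : G) :
    ∀ l : List G, (((a :: l).zip l).map fun p => e (p.2 - p.1)).prod = e (l.getLastD a - a)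
  | [] => by simp [he0]
  | b :: l => by
    rw [zip_cons_cons, map_cons, prod_cons, prod_map_zip_cons_self_of_map_add e he0 he b l,
      getLastD_cons, ← he]
    congr 1
    abel

theorem Pairwise.le_or_le_of_mem_zip_tail [LinearOrder α] :
    ∀ {l : List α}, l.Pairwise (· ≤ ·) → ∀ {p : α × α}, p ∈ l.zip l.tail →
      p.1 ≤ p.2 ∧ ∀ u ∈ l, u ≤ p.1 ∨ p.2 ≤ u
  | [], _, _, hp => by simp at hp
  | [_], _, _, hp => by simp at hp
  | a :: b :: l, hl, (p₁, p₂), hp => by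
    obtain ⟨hab, hbl⟩ := pairwise_cons.1 hl
    rcases mem_cons.1 hp with hab' | hp'
    · obtain ⟨rfl, rfl⟩ := Prod.mk.inj hab'
      refine ⟨hab p₂ (by simp), fun u hu => ?_⟩
      rcases mem_cons.1 hu with rfl | hu
      · exact .inl le_rfl
      · rcases mem_cons.1 hu with rfl | hu
        · exact .inr le_rfl
        · exact .inr ((pairwise_cons.1 hbl).1 u hu)
    · obtain ⟨hp₁₂, hbetween⟩ := hbl.le_or_le_of_mem_zip_tail hp'
      refine ⟨hp₁₂, fun u hu => ?_⟩
      rcases mem_cons.1 hu with rfl | hu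
      · exact .inl (hab p₁ (of_mem_zip hp').1)
      · exact hbetween u hu

end List

section Partition

variable {S T : ℝ} {α : Finset ℝ}

theorem IsPartition.exists_sort_eq_cons_s14 (hα : IsPartition S T α) :
    ∃ l, α.sort (· ≤ ·) = S :: l ∧ l.getLastD S = T := by
  obtain ⟨hS, hT, hbounds⟩ := hα
  have hsorted := α.pairwise_sort (· ≤ ·)
  obtain ⟨a, l, hl⟩ := List.exists_cons_of_ne_nil (List.ne_nil_of_mem ((α.mem_sort (· ≤ ·)).2 hS))
  have hmem : ∀ u, u ∈ a :: l ↔ u ∈ α := fun u => by rw [← hl, Finset.mem_sort]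
  rw [hl] at hsorted
  have haS : a = S := by
    refine le_antisymm ?_ (hbounds a ((hmem a).1 (by simp))).1
    rcases List.mem_cons.1 ((hmem S).2 hS) with h | h
    · exact h.ge
    · exact (List.pairwise_cons.1 hsorted).1 S h
  have hlast : l.getLastD a = T := by
    refine le_antisymm (hbounds _ ((hmem _).1 List.getLastD_mem_cons)).2 ?_
    rw [← List.getLast_eq_getLastD (List.cons_ne_nil a l)]
    exact hsorted.rel_getLast ((hmem T).2 hT)
  subst haS
  exact ⟨l, hl, hlast⟩

theorem IsPartition.sum_consecPairs_sub (hα : IsPartition S T α) :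
    ((consecPairs α).map fun p => p.2 - p.1).sum = T - S := by
  obtain ⟨l, hl, hlast⟩ := hα.exists_sort_eq_cons_s14
  rw [consecPairs, hl, List.tail_cons, List.sum_map_sub_zip_cons_self, hlast]

theorem IsPartition.partitionProd_of_map_add {M : Type*} [Ring M] (hα : IsPartition S T α)
    (e : ℝ → M) (he0 : e 0 = 1) (he : ∀ s t, e (s + t) = e s * e t) :
    partitionProd (fun r s => e (s - r)) α = e (T - S) := by
  obtain ⟨l, hl, hlast⟩ := hα.exists_sort_eq_cons_s14
  rw [partitionProd, consecPairs, hl, List.tail_cons,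
    List.prod_map_zip_cons_self_of_map_add e he0 he, hlast]

theorem mem_of_mem_consecPairs {p₁ p₂ : ℝ} (hp : (p₁, p₂) ∈ consecPairs α) :
    p₁ ∈ α ∧ p₂ ∈ α := by
  obtain ⟨hp₁, hp₂⟩ := List.of_mem_zip hp
  exact ⟨(Finset.mem_sort _).1 hp₁, (Finset.mem_sort _).1 (List.mem_of_mem_tail hp₂)⟩

theorem le_or_le_of_mem_consecPairs {p₁ p₂ : ℝ} (hp : (p₁, p₂) ∈ consecPairs α) :
    p₁ ≤ p₂ ∧ ∀ u ∈ α, u ≤ p₁ ∨ p₂ ≤ u := by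
  obtain ⟨hp₁₂, hbetween⟩ := (α.pairwise_sort (· ≤ ·)).le_or_le_of_mem_zip_tail hp
  exact ⟨hp₁₂, fun u hu => hbetween u ((Finset.mem_sort _).2 hu)⟩

end Partition

noncomputable def uniformPartition (S T : ℝ) (n : ℕ) : Finset ℝ :=
  (Finset.range (n + 1)).image fun k : ℕ => S + k * ((T - S) / n)

theorem isPartition_uniformPartition {S T : ℝ} (hST : S ≤ T) {n : ℕ} (hn : 0 < n) :
    IsPartition S T (uniformPartition S T n) := by
  have hn' : (0 : ℝ) < n := Nat.cast_pos.2 hn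
  refine ⟨Finset.mem_image.2 ⟨0, by simp, by simp⟩,
    Finset.mem_image.2 ⟨n, by simp, by field_simp; ring⟩, fun t ht => ?_⟩
  obtain ⟨k, hk, rfl⟩ := Finset.mem_image.1 ht
  have hkn : (k : ℝ) ≤ n := by exact_mod_cast Nat.lt_succ_iff.1 (Finset.mem_range.1 hk)
  have hstep : 0 ≤ (T - S) / n := div_nonneg (sub_nonneg.2 hST) hn'.le
  refine ⟨le_add_of_nonneg_right (mul_nonneg k.cast_nonneg hstep), ?_⟩
  calc S + k * ((T - S) / n) ≤ S + n * ((T - S) / n) := by gcongr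
    _ = T := by field_simp; ring

theorem sub_le_of_mem_consecPairs_of_uniformPartition_subset {S T : ℝ} (hST : S < T) {n : ℕ}
    (hn : 0 < n) {α : Finset ℝ} (hα : IsPartition S T α) (hγα : uniformPartition S T n ⊆ α)
    {p₁ p₂ : ℝ} (hp : (p₁, p₂) ∈ consecPairs α) : p₂ - p₁ ≤ (T - S) / n := by
  set τ := (T - S) / n
  have hτ : 0 < τ := div_pos (sub_pos.2 hST) (Nat.cast_pos.2 hn)
  obtain ⟨hp₁, hp₂⟩ := mem_of_mem_consecPairs hp
  obtain ⟨-, hbetween⟩ := le_or_le_of_mem_consecPairs hp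
  by_contra! hgap
  -- the first grid point to the right of `p₁` lies strictly inside the gap `(p₁, p₂)`
  set k := ⌊(p₁ - S) / τ⌋₊ + 1
  have hq : 0 ≤ (p₁ - S) / τ := div_nonneg (sub_nonneg.2 (hα.2.2 p₁ hp₁).1) hτ.le
  have hk_gt : p₁ - S < k * τ := by
    rw [← div_lt_iff₀ hτ]
    push_cast [k]
    exact Nat.lt_floor_add_one _
  have hk_le : k * τ ≤ p₁ - S + τ := by
    have := Nat.floor_le hq
    calc (k : ℝ) * τ ≤ ((p₁ - S) / τ + 1) * τ := by push_cast [k]; gcongr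
      _ = p₁ - S + τ := by field_simp
  have hkn : k ≤ n := by
    have : (k : ℝ) * τ < n * τ := by
      rw [show (n : ℝ) * τ = T - S from mul_div_cancel₀ _ (Nat.cast_pos.2 hn).ne']
      linarith [(hα.2.2 p₂ hp₂).2]
    exact_mod_cast (lt_of_mul_lt_mul_right this hτ.le).le
  have hu : S + k * τ ∈ α :=
    hγα (Finset.mem_image.2 ⟨k, Finset.mem_range.2 (Nat.lt_succ_of_le hkn), rfl⟩)
  rcases hbetween _ hu with h | h <;> linarith

theorem exists_partition_forall_consecPairs_sub_le {S T : ℝ} (hST : S < T) {h : ℝ}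
    (hh : 0 < h) : ∃ γ, IsPartition S T γ ∧ ∀ α, IsPartition S T α → γ ⊆ α →
      ∀ p ∈ consecPairs α, p.2 - p.1 ≤ h := by
  set n := ⌈(T - S) / h⌉₊ + 1
  have hn : 0 < n := Nat.succ_pos _
  refine ⟨uniformPartition S T n, isPartition_uniformPartition hST.le hn,
    fun α hα hγα p hp => ?_⟩
  refine (sub_le_of_mem_consecPairs_of_uniformPartition_subset hST hn hα hγα hp).trans ?_
  rw [div_le_iff₀ (Nat.cast_pos.2 hn), ← div_le_iff₀' hh]
  exact (Nat.le_ceil _).trans (by push_cast [n]; linarith)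

namespace List

variable {ι A : Type*} [NormedRing A] [NormOneClass A]

theorem norm_prod_map_le_exp_sum (g : ι → A) (a : ι → ℝ) :
    ∀ l : List ι, (∀ i ∈ l, ‖g i‖ ≤ Real.exp (a i)) →
      ‖(l.map g).prod‖ ≤ Real.exp (l.map a).sum
  | [], _ => by simp
  | i :: l, hg => by
    simp only [forall_mem_cons] at hg
    rw [map_cons, prod_cons, map_cons, sum_cons, Real.exp_add]
    exact (norm_mul_le _ _).trans
      (mul_le_mul hg.1 (norm_prod_map_le_exp_sum g a l hg.2) (norm_nonneg _) (Real.exp_nonneg _))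

theorem norm_prod_map_sub_prod_map_le (f g : ι → A) (a : ι → ℝ) :
    ∀ l : List ι, (∀ i ∈ l, 0 ≤ a i) → (∀ i ∈ l, ‖f i‖ ≤ Real.exp (a i)) →
      (∀ i ∈ l, ‖g i‖ ≤ Real.exp (a i)) →
      ‖(l.map f).prod - (l.map g).prod‖ ≤
        Real.exp (l.map a).sum * (l.map fun i => ‖f i - g i‖).sum
  | [], _, _, _ => by simp
  | i :: l, ha, hf, hg => by
    simp only [forall_mem_cons] at ha hf hg
    simp only [map_cons, prod_cons, sum_cons, Real.exp_add]
    have ih := norm_prod_map_sub_prod_map_le f g a l ha.2 hf.2 hg.2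
    have hgl := norm_prod_map_le_exp_sum g a l hg.2
    have hone : 1 ≤ Real.exp (a i) := Real.one_le_exp ha.1
    set E := Real.exp (l.map a).sum
    set D := (l.map fun i => ‖f i - g i‖).sum
    calc ‖f i * (l.map f).prod - g i * (l.map g).prod‖
        = ‖f i * ((l.map f).prod - (l.map g).prod) + (f i - g i) * (l.map g).prod‖ := by
          congr 1; noncomm_ring
      _ ≤ Real.exp (a i) * (E * D) + ‖f i - g i‖ * E := by
          refine (norm_add_le _ _).trans (add_le_add ?_ ?_) <;> refine (norm_mul_le _ _).trans ?_
          · exact mul_le_mul hf.1 ih (norm_nonneg _) (Real.exp_nonneg _)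
          · exact mul_le_mul_of_nonneg_left hgl (norm_nonneg _)
      _ ≤ Real.exp (a i) * E * (‖f i - g i‖ + D) := by
          have hE : 0 ≤ E := Real.exp_nonneg _
          nlinarith [mul_le_mul_of_nonneg_right hone (mul_nonneg hE (norm_nonneg (f i - g i)))]

end List

namespace NormedSpace

variable {A : Type*} [NormedRing A] [NormOneClass A] [NormedAlgebra ℝ A] [CompleteSpace A]

theorem norm_exp_sub_sum_le (y : A) (n : ℕ) :
    ‖exp y - ∑ m ∈ Finset.range n, (m.factorial : ℝ)⁻¹ • y ^ m‖ ≤ ‖y‖ ^ n * Real.exp ‖y‖ := by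
  rw [congrFun (exp_eq_tsum ℝ) y, ← (expSeries_summable' (𝕂 := ℝ) y).sum_add_tsum_nat_add n,
    add_sub_cancel_left, Real.exp_eq_exp_ℝ]
  refine tsum_of_norm_bounded ((expSeries_div_hasSum_exp ‖y‖).mul_left (‖y‖ ^ n)) fun m => ?_
  rw [norm_smul, norm_inv, Real.norm_natCast]
  calc ((m + n).factorial : ℝ)⁻¹ * ‖y ^ (m + n)‖ ≤ (m.factorial : ℝ)⁻¹ * ‖y‖ ^ (m + n) := by
        gcongr
        · exact Nat.le_add_right m n
        · exact norm_pow_le y _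
    _ = ‖y‖ ^ n * (‖y‖ ^ m / m.factorial) := by ring

theorem norm_exp_le (y : A) : ‖exp y‖ ≤ Real.exp ‖y‖ := by
  simpa using norm_exp_sub_sum_le y 0

theorem norm_exp_sub_one_sub_le (y : A) : ‖exp y - 1 - y‖ ≤ ‖y‖ ^ 2 * Real.exp ‖y‖ := by
  simpa [Finset.sum_range_succ, sub_sub] using norm_exp_sub_sum_le y 2

end NormedSpace

section Factor

variable {A : Type*} [NormedRing A] [NormOneClass A] [NormedAlgebra ℝ A] {x r : A} {t C : ℝ}

theorem norm_one_add_smul_add_le_exp (ht₀ : 0 ≤ t) (ht₁ : t ≤ 1) (hC : 0 ≤ C)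
    (hr : ‖r‖ ≤ t ^ 2 * C) : ‖1 + t • x + r‖ ≤ Real.exp (t * (‖x‖ + C)) :=
  calc ‖1 + t • x + r‖ ≤ ‖(1 : A)‖ + ‖t • x‖ + ‖r‖ := norm_add₃_le
    _ ≤ 1 + t * ‖x‖ + t * C := by
        rw [norm_one, norm_smul, Real.norm_of_nonneg ht₀]
        nlinarith [mul_le_mul_of_nonneg_right ht₁ (mul_nonneg ht₀ hC)]
    _ = t * (‖x‖ + C) + 1 := by ring
    _ ≤ Real.exp (t * (‖x‖ + C)) := Real.add_one_le_exp _

variable [CompleteSpace A]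

theorem norm_exp_smul_le_exp (ht₀ : 0 ≤ t) (hC : 0 ≤ C) :
    ‖NormedSpace.exp (t • x)‖ ≤ Real.exp (t * (‖x‖ + C)) := by
  refine (NormedSpace.norm_exp_le _).trans (Real.exp_le_exp.2 ?_)
  rw [norm_smul, Real.norm_of_nonneg ht₀]
  nlinarith

theorem norm_one_add_smul_add_sub_exp_le (ht₀ : 0 ≤ t) (htx : t * ‖x‖ ≤ 1)
    (hr : ‖r‖ ≤ t ^ 2 * C) :
    ‖1 + t • x + r - NormedSpace.exp (t • x)‖ ≤ t ^ 2 * (C + ‖x‖ ^ 2 * Real.exp 1) := by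
  have hnorm : ‖t • x‖ = t * ‖x‖ := by rw [norm_smul, Real.norm_of_nonneg ht₀]
  calc ‖1 + t • x + r - NormedSpace.exp (t • x)‖
      = ‖r - (NormedSpace.exp (t • x) - 1 - t • x)‖ := by congr 1; abel
    _ ≤ t ^ 2 * C + (t * ‖x‖) ^ 2 * Real.exp 1 := by
        refine (norm_sub_le _ _).trans (add_le_add hr ?_)
        refine (NormedSpace.norm_exp_sub_one_sub_le _).trans ?_
        rw [hnorm]
        gcongr
    _ = t ^ 2 * (C + ‖x‖ ^ 2 * Real.exp 1) := by ring

end Factor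

theorem norm_partitionProd_sub_exp_le {A : Type*} [NormedRing A] [NormOneClass A]
    [NormedAlgebra ℝ A] [CompleteSpace A] (x : A) (R : ℝ → A) {C h S T : ℝ} (hC : 0 ≤ C)
    (hh₁ : h ≤ 1) (hhx : h * ‖x‖ ≤ 1) (hR : ∀ t, 0 ≤ t → t ≤ h → ‖R t‖ ≤ t ^ 2 * C)
    {α : Finset ℝ} (hα : IsPartition S T α) (hmesh : ∀ p ∈ consecPairs α, p.2 - p.1 ≤ h) :
    ‖partitionProd (fun r s => 1 + (s - r) • x + R (s - r)) α -
        NormedSpace.exp ((T - S) • x)‖ ≤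
      Real.exp ((T - S) * (‖x‖ + C)) * ((C + ‖x‖ ^ 2 * Real.exp 1) * h * (T - S)) := by
  set K := C + ‖x‖ ^ 2 * Real.exp 1
  set d : ℝ × ℝ → ℝ := fun p => p.2 - p.1
  have hd : ∀ p ∈ consecPairs α, 0 ≤ d p ∧ d p ≤ h := fun p hp =>
    ⟨sub_nonneg.2 (le_or_le_of_mem_consecPairs hp).1, hmesh p hp⟩
  have hexp : partitionProd (fun r s => NormedSpace.exp ((s - r) • x)) α =
      NormedSpace.exp ((T - S) • x) :=
    let _ : NormedAlgebra ℚ A := .restrictScalars ℚ ℝ A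
    hα.partitionProd_of_map_add (fun t => NormedSpace.exp (t • x)) (by simp) fun s t => by
      rw [add_smul, NormedSpace.exp_add_of_commute ((Commute.refl x).smul_left s |>.smul_right t)]
  have hK : 0 ≤ K := by positivity
  have hdiff : ∀ p ∈ consecPairs α, ‖1 + d p • x + R (d p) - NormedSpace.exp (d p • x)‖ ≤
      K * h * d p := fun p hp => by
    obtain ⟨hd₀, hdh⟩ := hd p hp
    refine (norm_one_add_smul_add_sub_exp_le hd₀ ?_ (hR _ hd₀ hdh)).trans ?_
    · nlinarith [norm_nonneg x]
    · nlinarith [mul_le_mul_of_nonneg_left hdh (mul_nonneg hK hd₀)]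
  rw [← hexp, partitionProd, partitionProd]
  refine (List.norm_prod_map_sub_prod_map_le _ _ (fun p => d p * (‖x‖ + C)) _
    (fun p hp => mul_nonneg (hd p hp).1 (by positivity))
    (fun p hp => norm_one_add_smul_add_le_exp (hd p hp).1 ((hd p hp).2.trans hh₁) hC
      (hR _ (hd p hp).1 (hd p hp).2))
    (fun p hp => norm_exp_smul_le_exp (hd p hp).1 hC)).trans ?_
  rw [List.sum_map_mul_right, hα.sum_consecPairs_sub]
  gcongr
  calc _ ≤ ((consecPairs α).map fun p => K * h * d p).sum := List.sum_le_sum hdiff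
    _ = K * h * (T - S) := by rw [List.sum_map_mul_left, hα.sum_consecPairs_sub]

open Filter Topology

theorem stmt_14_general {A : Type*} [NormedRing A] [NormOneClass A] [NormedAlgebra ℝ A]
    [CompleteSpace A]
    (x : A) (Rt : ℝ → A)
    (C ε : ℝ) (hC : 0 ≤ C) (hε : 0 < ε)
    (hRt : ∀ t : ℝ, 0 ≤ t → t ≤ ε → ‖Rt t‖ ≤ t ^ 2 * C) :
    ∀ S T : ℝ, 0 ≤ S → S < T →
      ∀ δ > 0, ∃ γ : Finset ℝ, IsPartition S T γ ∧
        ∀ α : Finset ℝ, IsPartition S T α → γ ⊆ α →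
          ‖partitionProd (fun r s => 1 + (s - r) • x + Rt (s - r)) α -
              NormedSpace.exp ((T - S) • x)‖ < δ := by
  intro S T _ hST δ hδ
  set B := Real.exp ((T - S) * (‖x‖ + C)) * ((C + ‖x‖ ^ 2 * Real.exp 1) * (T - S))
  have hsmall : ∀ᶠ h in 𝓝 (0 : ℝ), h < ε ∧ h < 1 ∧ h * ‖x‖ < 1 ∧ B * h < δ :=
    (tendsto_id.eventually_lt_const hε).and <| (tendsto_id.eventually_lt_const one_pos).and <|
      (((continuous_mul_const ‖x‖).tendsto' 0 0 (zero_mul _)).eventually_lt_const one_pos).and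
        (((continuous_const_mul B).tendsto' 0 0 (mul_zero B)).eventually_lt_const hδ)
  obtain ⟨h, ⟨hhε, hh₁, hhx, hhδ⟩, hh⟩ :=
    ((hsmall.filter_mono nhdsWithin_le_nhds).and (self_mem_nhdsWithin (s := Set.Ioi 0))).exists
  obtain ⟨γ, hγ, hmesh⟩ := exists_partition_forall_consecPairs_sub_le hST hh
  refine ⟨γ, hγ, fun α hα hγα => ?_⟩
  calc _ ≤ _ := norm_partitionProd_sub_exp_le x Rt hC hh₁.le hhx.le
        (fun t ht₀ hth => hRt t ht₀ (hth.trans hhε.le)) hα (hmesh α hα hγα)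
    _ = B * h := by ring
    _ < δ := hhδ

/-- the net of ordered products `k_{t₂-t₁} ⋯ k_{t_{n+1}-t_n}` over the
partitions of `[S, T]`, where `k_t = 1 + t • x + R_t` with `‖R_t‖ ≤ t²·C` for small
`t ≥ 0`, converges in norm to `exp((T - S) • x)` in the Banach algebra `A`. -/
theorem stmt_14 {A : Type*} [NormedRing A] [NormOneClass A] [NormedAlgebra ℝ A]
    [CompleteSpace A]
    (x : A) (Rt : ℝ → A) (hR0 : Rt 0 = 0)
    (C ε : ℝ) (hC : 0 ≤ C) (hε : 0 < ε)
    (hRt : ∀ t : ℝ, 0 ≤ t → t ≤ ε → ‖Rt t‖ ≤ t ^ 2 * C) :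
    ∀ S T : ℝ, 0 ≤ S → S < T →
      ∀ δ > 0, ∃ γ : Finset ℝ, IsPartition S T γ ∧
        ∀ α : Finset ℝ, IsPartition S T α → γ ⊆ α →
          ‖partitionProd (fun r s => 1 + (s - r) • x + Rt (s - r)) α -
              NormedSpace.exp ((T - S) • x)‖ < δ :=
  stmt_14_general x Rt C ε hC hε hRt
end
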